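/- arXiv:cs/0005030 — 2 statements merged into one kernel-verified Lean document; each statement's English description precedes it below -/
import Mathlib

section
/- Reduction to the relevant variables for recursive and unique-solution models: a formula φ ∈ L⁺(S) is satisfiable in T_rec(S) if and only if it is satisfiable in T_rec(S_φ), and φ is satisfiable in T_uniq(S) if and only if it is satisfiable in T_uniq(S_φ). -/
/-- A signature `S = (U, V, R)`: finite (disjoint) sets of exogenous variables `U` and
endogenous variables `V`, together with a nonempty finite set (here: type) of possible
values for each variable. -/
structure Signature where
  U : Type
  V : Type
  uFin : Fintype U
  vFin : Fintype V
  vDecEq : DecidableEq V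
  valU : U → Type
  valV : V → Type
  valUFin : ∀ u, Fintype (valU u)
  valVFin : ∀ X, Fintype (valV X)
  valUNonempty : ∀ u, Nonempty (valU u)
  valVNonempty : ∀ X, Nonempty (valV X)

attribute [instance] Signature.uFin Signature.vFin Signature.vDecEq
  Signature.valUFin Signature.valVFin Signature.valUNonempty Signature.valVNonempty

/-- The standing assumption `|R(Y)| ≥ 2` for every variable `Y`. -/
def Signature.Standard (S : Signature) : Prop :=
  (∀ u, 2 ≤ Fintype.card (S.valU u)) ∧ (∀ X, 2 ≤ Fintype.card (S.valV X))

/-- A setting `u⃗` of values for all the exogenous variables. -/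
abbrev Signature.Context (S : Signature) : Type := ∀ u : S.U, S.valU u

/-- An assignment of values to all the endogenous variables. -/
abbrev Signature.Assignment (S : Signature) : Type := ∀ X : S.V, S.valV X

/-- An intervention `X⃗ ← x⃗`: a vector of distinct endogenous variables together with
values for them, encoded as a partial assignment. -/
abbrev Signature.Intervention (S : Signature) : Type := ∀ X : S.V, Option (S.valV X)

/-- The empty intervention (`[true]`). -/
def Signature.emptyInt (S : Signature) : S.Intervention := fun _ => none

/-- Extend an intervention by additionally setting `W` to `w`. -/
def intUpdate {S : Signature} (g : S.Intervention) (W : S.V) (w : S.valV W) :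
    S.Intervention :=
  fun X => if h : X = W then some (cast (congrArg S.valV h).symm w) else g X

/-- A causal model `T = (S, F)` over the signature `S`. -/
structure CausalModel (S : Signature) where
  F : ∀ X : S.V, S.Context → (∀ Y : S.V, Y ≠ X → S.valV Y) → S.valV X

/-- `v` is a solution of `T_{X⃗ ← x⃗}(u⃗)` (intervention encoded by `g`): intervened
variables take their set values, and every other variable satisfies its equation. -/
def CausalModel.IsSolution {S : Signature} (T : CausalModel S) (g : S.Intervention)
    (u : S.Context) (v : S.Assignment) : Prop :=
  ∀ X : S.V,
    (∀ x, g X = some x → v X = x) ∧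
    (g X = none → v X = T.F X u fun Y _ => v Y)

/-- `T ∈ T_uniq(S)`: the equations of `T_{X⃗ ← x⃗}(u⃗)` have a unique solution, for every
intervention and every context. -/
def CausalModel.UniqueSolutions {S : Signature} (T : CausalModel S) : Prop :=
  ∀ (g : S.Intervention) (u : S.Context), ∃! v : S.Assignment, T.IsSolution g u v

/-- `T ∈ T_rec(S)`: there is a (strict) total order `≺` on `V` such that `F_X` is
independent of the value of `Y` whenever `X ≺ Y`. -/
def CausalModel.Recursive {S : Signature} (T : CausalModel S) : Prop :=
  ∃ r : S.V → S.V → Prop, IsStrictTotalOrder S.V r ∧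
    ∀ (X : S.V) (u : S.Context) (w w' : ∀ Y : S.V, Y ≠ X → S.valV Y),
      (∀ (Y : S.V) (h : Y ≠ X), ¬ r X Y → w Y h = w' Y h) →
      T.F X u w = T.F X u w'

/-- Boolean combinations of atoms of the form `X(u⃗) = x`. -/
inductive IForm (S : Signature) : Type where
  | atom : (X : S.V) → S.Context → S.valV X → IForm S
  | not : IForm S → IForm S
  | and : IForm S → IForm S → IForm S
  | or : IForm S → IForm S → IForm S

namespace IForm

variable {S : Signature}

/-- The settings `u⃗` of the exogenous variables mentioned in a formula. -/
def mentions : IForm S → Set S.Context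
  | atom _ u _ => {u}
  | not φ => φ.mentions
  | and φ ψ => φ.mentions ∪ ψ.mentions
  | or φ ψ => φ.mentions ∪ ψ.mentions

/-- The endogenous variables appearing in a formula. -/
def vars : IForm S → Set S.V
  | atom X _ _ => {X}
  | not φ => φ.vars
  | and φ ψ => φ.vars ∪ ψ.vars
  | or φ ψ => φ.vars ∪ ψ.vars

/-- Evaluate a Boolean combination of atoms, where the atoms mentioning `u⃗` are
evaluated in the assignment `σ u⃗`. -/
def eval (σ : S.Context → S.Assignment) : IForm S → Prop
  | atom X u x => σ u X = x
  | not φ => ¬ φ.eval σ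
  | and φ ψ => φ.eval σ ∧ ψ.eval σ
  | or φ ψ => φ.eval σ ∨ ψ.eval σ

def imp (φ ψ : IForm S) : IForm S := or (not φ) ψ

/-- `φ ∧ ψ₁ ∧ … ∧ ψₙ`. -/
def conj (φ : IForm S) : List (IForm S) → IForm S
  | [] => φ
  | ψ :: l => and φ (conj ψ l)

/-- `φ ∨ ψ₁ ∨ … ∨ ψₙ`. -/
def disj (φ : IForm S) : List (IForm S) → IForm S
  | [] => φ
  | ψ :: l => or φ (disj ψ l)

/-- Evaluation under an arbitrary truth assignment to the atoms. -/
def pEval (val : ∀ X : S.V, S.Context → S.valV X → Prop) : IForm S → Prop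
  | atom X u x => val X u x
  | not φ => ¬ φ.pEval val
  | and φ ψ => φ.pEval val ∧ ψ.pEval val
  | or φ ψ => φ.pEval val ∨ ψ.pEval val

/-- An instance of a propositional tautology. -/
def Tautology (φ : IForm S) : Prop := ∀ val, φ.pEval val

theorem mentions_nonempty : ∀ φ : IForm S, φ.mentions.Nonempty
  | atom _ u _ => ⟨u, rfl⟩
  | not φ => mentions_nonempty φ
  | and φ _ => (mentions_nonempty φ).imp fun _ h => Set.mem_union_left _ h
  | or φ _ => (mentions_nonempty φ).imp fun _ h => Set.mem_union_left _ h

end IForm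

/-- `T ⊨ [X⃗ ← x⃗] φ` : for every choice, for each mentioned setting `u⃗`, of a solution
of `T_{X⃗ ← x⃗}(u⃗)`, the formula `φ` evaluates to true. -/
def CausalModel.boxSat {S : Signature} (T : CausalModel S) (g : S.Intervention)
    (φ : IForm S) : Prop :=
  ∀ σ : S.Context → S.Assignment,
    (∀ u ∈ φ.mentions, T.IsSolution g u (σ u)) → φ.eval σ

/-- The language `L⁺(S)`: Boolean combinations of basic causal formulas `[Y⃗ ← y⃗] φ`. -/
inductive LPlus (S : Signature) : Type where
  | box : S.Intervention → IForm S → LPlus S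
  | not : LPlus S → LPlus S
  | and : LPlus S → LPlus S → LPlus S
  | or : LPlus S → LPlus S → LPlus S

namespace LPlus

variable {S : Signature}

/-- Truth of a causal formula in a causal model. -/
def sat : LPlus S → CausalModel S → Prop
  | box g φ, T => T.boxSat g φ
  | not φ, T => ¬ φ.sat T
  | and φ ψ, T => φ.sat T ∧ ψ.sat T
  | or φ ψ, T => φ.sat T ∨ ψ.sat T

/-- `⟨X⃗ ← x⃗⟩ φ` abbreviates `¬ [X⃗ ← x⃗] ¬ φ`. -/
def dia (g : S.Intervention) (φ : IForm S) : LPlus S := not (box g (IForm.not φ))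

def imp (φ ψ : LPlus S) : LPlus S := or (not φ) ψ

def iff (φ ψ : LPlus S) : LPlus S := and (imp φ ψ) (imp ψ φ)

def conj (φ : LPlus S) : List (LPlus S) → LPlus S
  | [] => φ
  | ψ :: l => and φ (conj ψ l)

def disj (φ : LPlus S) : List (LPlus S) → LPlus S
  | [] => φ
  | ψ :: l => or φ (disj ψ l)

/-- Membership in the sublanguage `L_uniq(S)`: Boolean combinations of formulas of the
form `[Y⃗ ← y⃗](X(u⃗) = x)`. -/
def InLuniq : LPlus S → Prop
  | box _ φ => ∃ (X : S.V) (u : S.Context) (x : S.valV X), φ = IForm.atom X u x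
  | not φ => φ.InLuniq
  | and φ ψ => φ.InLuniq ∧ ψ.InLuniq
  | or φ ψ => φ.InLuniq ∧ ψ.InLuniq

/-- Evaluation under an arbitrary truth assignment to the basic causal formulas. -/
def pEval (val : S.Intervention → IForm S → Prop) : LPlus S → Prop
  | box g φ => val g φ
  | not φ => ¬ φ.pEval val
  | and φ ψ => φ.pEval val ∧ ψ.pEval val
  | or φ ψ => φ.pEval val ∨ ψ.pEval val

/-- An instance of a propositional tautology. -/
def Tautology (φ : LPlus S) : Prop := ∀ val, φ.pEval val

/-- The endogenous variables appearing in a causal formula (including the variables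
set by its interventions). -/
def vars : LPlus S → Set S.V
  | box g φ => {X | g X ≠ none} ∪ φ.vars
  | not φ => φ.vars
  | and φ ψ => φ.vars ∪ ψ.vars
  | or φ ψ => φ.vars ∪ ψ.vars

/-- The settings of the exogenous variables mentioned in a causal formula. -/
def contexts : LPlus S → Set S.Context
  | box _ φ => φ.mentions
  | not φ => φ.contexts
  | and φ ψ => φ.contexts ∪ ψ.contexts
  | or φ ψ => φ.contexts ∪ ψ.contexts

theorem contexts_nonempty : ∀ φ : LPlus S, φ.contexts.Nonempty
  | box _ φ => φ.mentions_nonempty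
  | not φ => contexts_nonempty φ
  | and φ _ => (contexts_nonempty φ).imp fun _ h => Set.mem_union_left _ h
  | or φ _ => (contexts_nonempty φ).imp fun _ h => Set.mem_union_left _ h

end LPlus

/-- `Y` affects `Z` in `T`: for some setting of the exogenous variables and of some
other endogenous variables, changing the value of `Y` changes the value of `Z`. -/
def CausalModel.Affects {S : Signature} (T : CausalModel S) (Y Z : S.V) : Prop :=
  Y ≠ Z ∧ ∃ (g : S.Intervention) (y : S.valV Y) (u : S.Context) (z z' : S.valV Z),
    g Y = none ∧ g Z = none ∧ z ≠ z' ∧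
    T.boxSat (intUpdate g Y y) (IForm.atom Z u z') ∧ T.boxSat g (IForm.atom Z u z)

/-- Provability from a set of axioms using modus ponens. -/
inductive Provable {S : Signature} (Ax : Set (LPlus S)) : LPlus S → Prop
  | ax : ∀ {φ}, φ ∈ Ax → Provable Ax φ
  | mp : ∀ {φ ψ}, Provable Ax (φ.imp ψ) → Provable Ax φ → Provable Ax ψ

/-! ### Reduced signatures -/

/-- The signature with endogenous variables `Vs ⊆ V`, a single fresh exogenous variable
`U*` whose range is the set `C` of settings of the original exogenous variables, and
the original ranges for the variables of `Vs`. -/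
noncomputable def restrictedSig (S : Signature) (Vs : Set S.V) (C : Set S.Context)
    (hC : C.Nonempty) : Signature where
  U := PUnit
  V := {X : S.V // X ∈ Vs}
  uFin := inferInstance
  vFin := (Set.toFinite Vs).fintype
  vDecEq := inferInstance
  valU := fun _ => {u : S.Context // u ∈ C}
  valV := fun X => S.valV X.1
  valUFin := fun _ => (Set.toFinite C).fintype
  valVFin := fun X => S.valVFin X.1
  valUNonempty := fun _ => hC.to_subtype
  valVNonempty := fun X => S.valVNonempty X.1

/-- The reduced signature `S_φ = ({U*}, V_φ, R_φ)`. -/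
noncomputable def reducedSig (S : Signature) (φ : LPlus S) : Signature :=
  restrictedSig S φ.vars φ.contexts φ.contexts_nonempty

/-- Read an inner formula (whose variables and settings all appear in `φ₀`) as a
formula over the reduced signature `S_{φ₀}`. -/
noncomputable def IForm.restrict {S : Signature} (φ₀ : LPlus S) :
    (ψ : IForm S) → (∀ X ∈ ψ.vars, X ∈ φ₀.vars) → (∀ u ∈ ψ.mentions, u ∈ φ₀.contexts) →
    IForm (reducedSig S φ₀)
  | .atom X u x, h, h2 => .atom ⟨X, h X rfl⟩ (fun _ => ⟨u, h2 u rfl⟩) x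
  | .not ψ, h, h2 => .not (ψ.restrict φ₀ h h2)
  | .and ψ χ, h, h2 =>
      .and (ψ.restrict φ₀ (fun X hX => h X (Set.mem_union_left _ hX))
              (fun u hu => h2 u (Set.mem_union_left _ hu)))
           (χ.restrict φ₀ (fun X hX => h X (Set.mem_union_right _ hX))
              (fun u hu => h2 u (Set.mem_union_right _ hu)))
  | .or ψ χ, h, h2 =>
      .or (ψ.restrict φ₀ (fun X hX => h X (Set.mem_union_left _ hX))
             (fun u hu => h2 u (Set.mem_union_left _ hu)))
          (χ.restrict φ₀ (fun X hX => h X (Set.mem_union_right _ hX))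
             (fun u hu => h2 u (Set.mem_union_right _ hu)))

/-- Read a causal formula (whose variables and settings all appear in `φ₀`) as a
formula over the reduced signature `S_{φ₀}`. -/
noncomputable def LPlus.restrict {S : Signature} (φ₀ : LPlus S) :
    (ψ : LPlus S) → (∀ X ∈ ψ.vars, X ∈ φ₀.vars) → (∀ u ∈ ψ.contexts, u ∈ φ₀.contexts) →
    LPlus (reducedSig S φ₀)
  | .box g χ, h, h2 =>
      .box (fun X' => g X'.1)
        (χ.restrict φ₀ (fun X hX => h X (Set.mem_union_right _ hX)) h2)
  | .not ψ, h, h2 => .not (LPlus.restrict φ₀ ψ h h2)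
  | .and ψ χ, h, h2 =>
      .and (LPlus.restrict φ₀ ψ (fun X hX => h X (Set.mem_union_left _ hX))
              (fun u hu => h2 u (Set.mem_union_left _ hu)))
           (LPlus.restrict φ₀ χ (fun X hX => h X (Set.mem_union_right _ hX))
              (fun u hu => h2 u (Set.mem_union_right _ hu)))
  | .or ψ χ, h, h2 =>
      .or (LPlus.restrict φ₀ ψ (fun X hX => h X (Set.mem_union_left _ hX))
             (fun u hu => h2 u (Set.mem_union_left _ hu)))
          (LPlus.restrict φ₀ χ (fun X hX => h X (Set.mem_union_right _ hX))
             (fun u hu => h2 u (Set.mem_union_right _ hu)))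

/-- `φ` read as a formula of `L⁺(S_φ)`. -/
noncomputable def LPlus.reduced {S : Signature} (φ : LPlus S) : LPlus (reducedSig S φ) :=
  LPlus.restrict φ φ (fun _ h => h) (fun _ h => h)


/-!
A formula `φ` only observes the variables of `V_φ` at the settings it mentions. A model `T`
with unique solutions is projected to `S_φ` by letting the equation of `X ∈ V_φ` return the
value of `X` in the solution of `T` in which all other variables of `V_φ` are fixed by
intervention; conversely a model over `S_φ` is extended to `S` by constant equations for the
remaining variables, the unmentioned settings being treated like a mentioned one. Both
constructions preserve uniqueness of solutions and recursiveness, and for interventions on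
`V_φ` at mentioned settings their solutions agree with those of the original model on `V_φ`;
so the two models satisfy the same formulas whose variables and settings come from `φ`.
-/

theorem Option.eq_getD_iff {α : Type*} {o : Option α} {a c : α} :
    a = o.getD c ↔ (∀ x, o = some x → a = x) ∧ (o = none → a = c) := by
  cases o <;> simp

theorem forall_iff_forall_subtype_and_forall_notMem {α : Type*} {s : Set α} {P : α → Prop} :
    (∀ a, P a) ↔ (∀ a : s, P a) ∧ ∀ a ∉ s, P a :=
  ⟨fun h => ⟨fun a => h a, fun a _ => h a⟩,
    fun h a => (em (a ∈ s)).elim (fun ha => h.1 ⟨a, ha⟩) (h.2 a)⟩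

namespace CausalModel

variable {S : Signature}

/-- The condition of `CausalModel.Recursive` for a fixed order `r`. -/
def RespectsOrder (T : CausalModel S) (r : S.V → S.V → Prop) : Prop :=
  ∀ (X : S.V) (u : S.Context) (w w' : ∀ Y : S.V, Y ≠ X → S.valV Y),
    (∀ (Y : S.V) (h : Y ≠ X), ¬ r X Y → w Y h = w' Y h) → T.F X u w = T.F X u w'

theorem IsSolution.of_intervention {T : CausalModel S} {g g' : S.Intervention}
    {u : S.Context} {v : S.Assignment} (hv : T.IsSolution g u v)
    (hnone : ∀ X, g' X = none → g X = none) (hsome : ∀ X x, g' X = some x → v X = x) :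
    T.IsSolution g' u v :=
  fun X => ⟨hsome X, fun hX => (hv X).2 (hnone X hX)⟩

namespace RespectsOrder

variable {T : CausalModel S} {r : S.V → S.V → Prop} [IsStrictTotalOrder S.V r]

theorem apply_eq_of_isSolution (hT : T.RespectsOrder r) {D : Set S.V}
    (hD : ∀ Z ∈ D, ∀ W, r W Z → W ∈ D) {g₁ g₂ : S.Intervention}
    (hg : ∀ Z ∈ D, g₁ Z = g₂ Z)
    {u : S.Context} {v₁ v₂ : S.Assignment} (h₁ : T.IsSolution g₁ u v₁)
    (h₂ : T.IsSolution g₂ u v₂) : ∀ Z ∈ D, v₁ Z = v₂ Z := by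
  intro Z
  induction Z using (Finite.wellFounded_of_trans_of_irrefl r).induction with
  | _ Z ih =>
    intro hZ
    cases hgZ : g₁ Z with
    | some x => rw [(h₁ Z).1 x hgZ, (h₂ Z).1 x (hg Z hZ ▸ hgZ)]
    | none =>
      rw [(h₁ Z).2 hgZ, (h₂ Z).2 (hg Z hZ ▸ hgZ)]
      refine hT Z u _ _ fun W hW hZW => ?_
      have hWZ : r W Z := (trichotomous_of r W Z).resolve_right (not_or.2 ⟨hW, hZW⟩)
      exact ih W hWZ (hD Z hZ W hWZ)

theorem exists_isSolution (hT : T.RespectsOrder r) (g : S.Intervention) (u : S.Context) :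
    ∃ v, T.IsSolution g u v := by
  classical
  have wf : WellFounded r := Finite.wellFounded_of_trans_of_irrefl r
  let step : ∀ X : S.V, (∀ Y, r Y X → S.valV Y) → S.valV X := fun X ih =>
    (g X).getD (T.F X u fun Y _ =>
      if h : r Y X then ih Y h else Classical.arbitrary (S.valV Y))
  let v : S.Assignment := wf.fix step
  have hv : ∀ X, v X = step X (fun Y _ => v Y) := wf.fix_eq step
  refine ⟨v, fun X => ⟨fun x hx => by rw [hv X]; simp only [step, hx, Option.getD_some],
    fun hx => ?_⟩⟩
  rw [hv X]
  simp only [step, hx, Option.getD_none]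
  refine hT X u _ _ fun Y hY hXY => ?_
  rw [dif_pos ((trichotomous_of r Y X).resolve_right (not_or.2 ⟨hY, hXY⟩))]

end RespectsOrder

theorem Recursive.uniqueSolutions {T : CausalModel S} (hT : T.Recursive) :
    T.UniqueSolutions := by
  obtain ⟨r, hr, hresp⟩ : ∃ r, IsStrictTotalOrder S.V r ∧ T.RespectsOrder r := hT
  intro g u
  obtain ⟨v, hv⟩ := hresp.exists_isSolution g u
  exact ⟨v, hv, fun v' hv' => funext fun X =>
    hresp.apply_eq_of_isSolution (D := Set.univ) (by simp) (by simp) hv' hv X trivial⟩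

namespace UniqueSolutions

variable {T : CausalModel S}

noncomputable def sol (hT : T.UniqueSolutions) (g : S.Intervention) (u : S.Context) :
    S.Assignment :=
  (hT g u).choose

theorem isSolution_sol (hT : T.UniqueSolutions) (g : S.Intervention) (u : S.Context) :
    T.IsSolution g u (hT.sol g u) :=
  (hT g u).choose_spec.1

theorem eq_sol (hT : T.UniqueSolutions) {g : S.Intervention} {u : S.Context}
    {v : S.Assignment} (hv : T.IsSolution g u v) : v = hT.sol g u :=
  (hT g u).choose_spec.2 v hv

end UniqueSolutions

end CausalModel

namespace IForm

variable {S : Signature}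

theorem eval_congr (χ : IForm S) {σ₁ σ₂ : S.Context → S.Assignment}
    (h : ∀ u ∈ χ.mentions, σ₁ u = σ₂ u) : χ.eval σ₁ ↔ χ.eval σ₂ := by
  induction χ with
  | atom X u x => simp only [eval, h u rfl]
  | not χ ih => exact not_congr (ih h)
  | and χ ψ ih₁ ih₂ =>
    exact and_congr (ih₁ fun u hu => h u (.inl hu)) (ih₂ fun u hu => h u (.inr hu))
  | or χ ψ ih₁ ih₂ =>
    exact or_congr (ih₁ fun u hu => h u (.inl hu)) (ih₂ fun u hu => h u (.inr hu))

theorem eval_restrict (φ₀ : LPlus S) {σ : S.Context → S.Assignment}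
    {σ' : (reducedSig S φ₀).Context → (reducedSig S φ₀).Assignment}
    (h : ∀ (u : S.Context) (hu : u ∈ φ₀.contexts) (X' : (reducedSig S φ₀).V),
      σ' (fun _ => ⟨u, hu⟩) X' = σ u X'.1) :
    ∀ (χ : IForm S) (hv : ∀ X ∈ χ.vars, X ∈ φ₀.vars)
      (hc : ∀ u ∈ χ.mentions, u ∈ φ₀.contexts),
      (χ.restrict φ₀ hv hc).eval σ' ↔ χ.eval σ
  | .atom X u x, hv, hc => by
    simp only [restrict, eval]
    rw [h u (hc u rfl) ⟨X, hv X rfl⟩]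
    rfl
  | .not χ, _, _ => not_congr (eval_restrict φ₀ h χ _ _)
  | .and χ ψ, _, _ => and_congr (eval_restrict φ₀ h χ _ _) (eval_restrict φ₀ h ψ _ _)
  | .or χ ψ, _, _ => or_congr (eval_restrict φ₀ h χ _ _) (eval_restrict φ₀ h ψ _ _)

end IForm

theorem CausalModel.UniqueSolutions.boxSat_iff {S : Signature} {T : CausalModel S}
    (hT : T.UniqueSolutions) (g : S.Intervention) (χ : IForm S) :
    T.boxSat g χ ↔ χ.eval (hT.sol g) :=
  ⟨fun h => h _ fun u _ => hT.isSolution_sol g u,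
    fun h _ hσ => (χ.eval_congr fun u hu => hT.eq_sol (hσ u hu)).2 h⟩

namespace LPlus

variable {S : Signature} {φ₀ : LPlus S} {T : CausalModel S}
  {T' : CausalModel (reducedSig S φ₀)}

theorem sat_restrict_iff (hT : T.UniqueSolutions) (hT' : T'.UniqueSolutions)
    (hsol : ∀ g : S.Intervention, (∀ Y ∉ φ₀.vars, g Y = none) →
      ∀ (u : S.Context) (hu : u ∈ φ₀.contexts) (X' : (reducedSig S φ₀).V),
        hT'.sol (fun X' => g X'.1) (fun _ => ⟨u, hu⟩) X' = hT.sol g u X'.1) :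
    ∀ (ψ : LPlus S) (hv : ∀ X ∈ ψ.vars, X ∈ φ₀.vars)
      (hc : ∀ u ∈ ψ.contexts, u ∈ φ₀.contexts),
      (LPlus.restrict φ₀ ψ hv hc).sat T' ↔ ψ.sat T
  | .box g χ, hv, hc => by
    have hg : ∀ Y ∉ φ₀.vars, g Y = none := fun Y hY => by
      by_contra h
      exact hY (hv Y (.inl h))
    exact (hT'.boxSat_iff _ _).trans
      ((IForm.eval_restrict φ₀ (hsol g hg) χ _ _).trans (hT.boxSat_iff g χ).symm)
  | .not ψ, _, _ => not_congr (sat_restrict_iff hT hT' hsol ψ _ _)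
  | .and ψ χ, _, _ =>
    and_congr (sat_restrict_iff hT hT' hsol ψ _ _) (sat_restrict_iff hT hT' hsol χ _ _)
  | .or ψ χ, _, _ =>
    or_congr (sat_restrict_iff hT hT' hsol ψ _ _) (sat_restrict_iff hT hT' hsol χ _ _)

end LPlus

def Signature.interveneOthers (S : Signature) (X : S.V) (w : ∀ Y : S.V, Y ≠ X → S.valV Y) :
    S.Intervention :=
  fun Y => if h : Y = X then none else some (w Y h)

theorem Signature.interveneOthers_self (S : Signature) (X : S.V)
    (w : ∀ Y : S.V, Y ≠ X → S.valV Y) : S.interveneOthers X w X = none :=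
  dif_pos rfl

theorem Signature.interveneOthers_of_ne (S : Signature) {X Y : S.V}
    (w : ∀ Y : S.V, Y ≠ X → S.valV Y) (h : Y ≠ X) :
    S.interveneOthers X w Y = some (w Y h) :=
  dif_neg h

namespace restrictedSig

variable {S : Signature} {Vs : Set S.V} {C : Set S.Context} {hC : C.Nonempty}

open Classical in
noncomputable def extendIntervention (g' : (restrictedSig S Vs C hC).Intervention) :
    S.Intervention :=
  fun Y => if hY : Y ∈ Vs then g' ⟨Y, hY⟩ else none

theorem extendIntervention_val (g' : (restrictedSig S Vs C hC).Intervention)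
    (X' : (restrictedSig S Vs C hC).V) : extendIntervention g' X'.1 = g' X' :=
  dif_pos X'.2

theorem extendIntervention_of_notMem (g' : (restrictedSig S Vs C hC).Intervention) {Y : S.V}
    (hY : Y ∉ Vs) : extendIntervention g' Y = none :=
  dif_neg hY

theorem extendIntervention_restrict {g : S.Intervention} (hg : ∀ Y ∉ Vs, g Y = none) :
    extendIntervention (Vs := Vs) (hC := hC) (fun X' => g X'.1) = g :=
  funext <| forall_iff_forall_subtype_and_forall_notMem.2
    ⟨fun (X' : (restrictedSig S Vs C hC).V) => extendIntervention_val _ X',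
      fun Y hY => (extendIntervention_of_notMem _ hY).trans (hg Y hY).symm⟩

section Project

noncomputable def project {T : CausalModel S} (hT : T.UniqueSolutions) :
    CausalModel (restrictedSig S Vs C hC) where
  F X' u' w' := hT.sol (extendIntervention ((restrictedSig S Vs C hC).interveneOthers X' w'))
    (u' PUnit.unit).1 X'.1

variable {T : CausalModel S} (hT : T.UniqueSolutions)

theorem project_F_eq {g' : (restrictedSig S Vs C hC).Intervention}
    {X' : (restrictedSig S Vs C hC).V} (hX' : g' X' = none) {u : S.Context} (hu : u ∈ C)
    {v : S.Assignment} (hv : T.IsSolution (extendIntervention g') u v) :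
    (project hT).F X' (fun _ => ⟨u, hu⟩) (fun Y' _ => v Y'.1) = v X'.1 := by
  show hT.sol _ u X'.1 = v X'.1
  rw [← hT.eq_sol (hv.of_intervention ?_ ?_)]
  · refine forall_iff_forall_subtype_and_forall_notMem.2
      ⟨fun (Y' : (restrictedSig S Vs C hC).V) hY => ?_,
        fun Y hY _ => extendIntervention_of_notMem _ hY⟩
    rw [extendIntervention_val] at hY ⊢
    by_cases h : Y' = X'
    · subst h; exact hX'
    · exact absurd ((Signature.interveneOthers_of_ne _ _ h).symm.trans hY)
        (Option.some_ne_none _)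
  · refine forall_iff_forall_subtype_and_forall_notMem.2
      ⟨fun (Y' : (restrictedSig S Vs C hC).V) y hY => ?_,
        fun Y hY y hy => absurd ((extendIntervention_of_notMem _ hY).symm.trans hy)
          (Option.some_ne_none _).symm⟩
    rw [extendIntervention_val] at hY
    by_cases h : Y' = X'
    · subst h
      exact absurd ((Signature.interveneOthers_self _ _ _).symm.trans hY).symm
        (Option.some_ne_none _)
    · exact Option.some_injective _ ((Signature.interveneOthers_of_ne _ _ h).symm.trans hY)

theorem sol_extendIntervention_some_val (u : S.Context) (v' : (restrictedSig S Vs C hC).Assignment)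
    (X' : (restrictedSig S Vs C hC).V) :
    hT.sol (extendIntervention fun Y' => some (v' Y')) u X'.1 = v' X' :=
  (hT.isSolution_sol _ u X'.1).1 _ (extendIntervention_val _ X')

theorem isSolution_project {g' : (restrictedSig S Vs C hC).Intervention} {u : S.Context}
    (hu : u ∈ C) {v : S.Assignment} (hv : T.IsSolution (extendIntervention g') u v) :
    (project hT).IsSolution g' (fun _ => ⟨u, hu⟩) (fun X' => v X'.1) := fun X' =>
  ⟨fun x hx => (hv X'.1).1 x ((extendIntervention_val g' X').trans hx),
    fun hx => (project_F_eq hT hx hu hv).symm⟩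

theorem sol_interveneOthers_eq {u : S.Context} {v' : (restrictedSig S Vs C hC).Assignment}
    {X' : (restrictedSig S Vs C hC).V}
    (hX' : hT.sol (extendIntervention ((restrictedSig S Vs C hC).interveneOthers X'
      fun Y' _ => v' Y')) u X'.1 = v' X') :
    hT.sol (extendIntervention ((restrictedSig S Vs C hC).interveneOthers X'
      fun Y' _ => v' Y')) u = hT.sol (extendIntervention fun Y' => some (v' Y')) u := by
  refine hT.eq_sol ((hT.isSolution_sol _ u).of_intervention ?_ ?_)
  · refine forall_iff_forall_subtype_and_forall_notMem.2
      ⟨fun (Y' : (restrictedSig S Vs C hC).V) hY => ?_,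
        fun Y hY _ => extendIntervention_of_notMem _ hY⟩
    exact absurd ((extendIntervention_val _ Y').symm.trans hY) (Option.some_ne_none _)
  · refine forall_iff_forall_subtype_and_forall_notMem.2
      ⟨fun (Y' : (restrictedSig S Vs C hC).V) y hY => ?_,
        fun Y hY y hy => absurd ((extendIntervention_of_notMem _ hY).symm.trans hy)
          (Option.some_ne_none _).symm⟩
    obtain rfl := Option.some_injective _ ((extendIntervention_val _ Y').symm.trans hY)
    by_cases h : Y' = X'
    · subst h; exact hX'
    · refine (hT.isSolution_sol _ u Y'.1).1 _ ?_
      exact (extendIntervention_val _ Y').trans (Signature.interveneOthers_of_ne _ _ h)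

theorem isSolution_of_isSolution_project {g' : (restrictedSig S Vs C hC).Intervention}
    {u : S.Context} (hu : u ∈ C) {v' : (restrictedSig S Vs C hC).Assignment}
    (hv' : (project hT).IsSolution g' (fun _ => ⟨u, hu⟩) v') :
    T.IsSolution (extendIntervention g') u
      (hT.sol (extendIntervention fun Y' => some (v' Y')) u) := by
  -- `project` gives each free `X'` the value `v' X'`, so fixing all of `Vs` at `v'`
  -- changes nothing.
  have hpin := hT.isSolution_sol (extendIntervention fun Y' => some (v' Y')) u
  refine forall_iff_forall_subtype_and_forall_notMem.2
    ⟨fun (X' : (restrictedSig S Vs C hC).V) => ⟨fun x hx => ?_, fun hx => ?_⟩,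
      fun Y hY => ⟨fun y hy => ?_, fun _ => (hpin Y).2 (extendIntervention_of_notMem _ hY)⟩⟩
  · rw [sol_extendIntervention_some_val,
      (hv' X').1 x ((extendIntervention_val g' X').symm.trans hx)]
  · have hX' := ((hv' X').2 ((extendIntervention_val g' X').symm.trans hx)).symm
    rw [← sol_interveneOthers_eq hT hX']
    exact (hT.isSolution_sol _ u X'.1).2
      ((extendIntervention_val _ X').trans (Signature.interveneOthers_self _ _ _))
  · exact absurd ((extendIntervention_of_notMem _ hY).symm.trans hy) (Option.some_ne_none _).symm

theorem eq_of_isSolution_project {g' : (restrictedSig S Vs C hC).Intervention}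
    {u : S.Context} (hu : u ∈ C) {v' : (restrictedSig S Vs C hC).Assignment}
    (hv' : (project hT).IsSolution g' (fun _ => ⟨u, hu⟩) v')
    (X' : (restrictedSig S Vs C hC).V) :
    v' X' = hT.sol (extendIntervention g') u X'.1 := by
  rw [← hT.eq_sol (isSolution_of_isSolution_project hT hu hv'),
    sol_extendIntervention_some_val]

theorem project_uniqueSolutions : (project (Vs := Vs) (hC := hC) hT).UniqueSolutions := by
  intro g' u'
  show ∃! v', (project hT).IsSolution g' (fun _ => ⟨(u' PUnit.unit).1, (u' PUnit.unit).2⟩) v'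
  exact ⟨_, isSolution_project hT _ (hT.isSolution_sol _ _),
    fun v' hv' => funext (eq_of_isSolution_project hT _ hv')⟩

theorem project_sol {g : S.Intervention} (hg : ∀ Y ∉ Vs, g Y = none) {u : S.Context}
    (hu : u ∈ C) (X' : (restrictedSig S Vs C hC).V) :
    (project_uniqueSolutions hT).sol (fun X' => g X'.1) (fun _ => ⟨u, hu⟩) X' =
      hT.sol g u X'.1 :=
  (eq_of_isSolution_project hT hu ((project_uniqueSolutions hT).isSolution_sol _ _) X').trans
    (congrArg (fun g => hT.sol g u X'.1) (extendIntervention_restrict hg))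

theorem project_recursive (hrec : T.Recursive) :
    (project (Vs := Vs) (hC := hC) hT).Recursive := by
  obtain ⟨r, hr, hresp⟩ : ∃ r, IsStrictTotalOrder S.V r ∧ T.RespectsOrder r := hrec
  refine ⟨Function.onFun r Subtype.val, Subtype.val_injective.isStrictTotalOrder_onFun r, ?_⟩
  intro X' u' w₁ w₂ hw
  refine hresp.apply_eq_of_isSolution (D := {Z | ¬ r X'.1 Z})
    (fun Z hZ W hWZ hXW => hZ (_root_.trans hXW hWZ)) ?_ (hT.isSolution_sol _ _)
    (hT.isSolution_sol _ _) X'.1 (irrefl X'.1)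
  refine forall_iff_forall_subtype_and_forall_notMem.2
    ⟨fun (Z' : (restrictedSig S Vs C hC).V) hZ => ?_,
      fun Z hZ _ =>
        (extendIntervention_of_notMem _ hZ).trans (extendIntervention_of_notMem _ hZ).symm⟩
  rw [extendIntervention_val, extendIntervention_val]
  by_cases h : Z' = X'
  · subst h
    rw [Signature.interveneOthers_self, Signature.interveneOthers_self]
  · rw [Signature.interveneOthers_of_ne _ _ h, Signature.interveneOthers_of_ne _ _ h, hw Z' h hZ]

end Project

section Extend

open Classical in
noncomputable def reduceContext (u : S.Context) : (restrictedSig S Vs C hC).Context :=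
  fun _ => if hu : u ∈ C then ⟨u, hu⟩ else ⟨hC.some, hC.some_mem⟩

theorem reduceContext_of_mem {u : S.Context} (hu : u ∈ C) :
    reduceContext (Vs := Vs) (hC := hC) u = fun _ => ⟨u, hu⟩ :=
  funext fun _ => dif_pos hu

open Classical in
noncomputable def extend (T' : CausalModel (restrictedSig S Vs C hC)) : CausalModel S where
  F X u w :=
    if hX : X ∈ Vs then
      T'.F ⟨X, hX⟩ (reduceContext u) (fun Y' hY' => w Y'.1 fun e => hY' (Subtype.ext e))
    else Classical.arbitrary (S.valV X)

theorem extend_F_val (T' : CausalModel (restrictedSig S Vs C hC))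
    (X' : (restrictedSig S Vs C hC).V) (u : S.Context) (w : ∀ Y : S.V, Y ≠ X'.1 → S.valV Y) :
    (extend T').F X'.1 u w =
      T'.F X' (reduceContext u) (fun Y' hY' => w Y'.1 fun e => hY' (Subtype.ext e)) :=
  dif_pos X'.2

theorem extend_F_of_notMem (T' : CausalModel (restrictedSig S Vs C hC)) {X : S.V}
    (hX : X ∉ Vs) (u : S.Context) (w : ∀ Y : S.V, Y ≠ X → S.valV Y) :
    (extend T').F X u w = Classical.arbitrary (S.valV X) :=
  dif_neg hX

theorem isSolution_extend_iff {T' : CausalModel (restrictedSig S Vs C hC)}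
    {g : S.Intervention} {u : S.Context} {v : S.Assignment} :
    (extend T').IsSolution g u v ↔
      T'.IsSolution (fun X' => g X'.1) (reduceContext u) (fun X' => v X'.1) ∧
        ∀ Y ∉ Vs, v Y = (g Y).getD (Classical.arbitrary (S.valV Y)) := by
  constructor
  · intro h
    refine ⟨fun X' => ⟨(h X'.1).1, fun hx => ((h X'.1).2 hx).trans (extend_F_val T' X' u _)⟩,
      fun Y hY => Option.eq_getD_iff.2 ?_⟩
    exact ⟨(h Y).1, fun hy => ((h Y).2 hy).trans (extend_F_of_notMem T' hY u _)⟩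
  · rintro ⟨hVs, hrest⟩ X
    by_cases hX : X ∈ Vs
    · exact ⟨(hVs ⟨X, hX⟩).1, fun hx =>
        ((hVs ⟨X, hX⟩).2 hx).trans (extend_F_val T' ⟨X, hX⟩ u fun Y _ => v Y).symm⟩
    · have := Option.eq_getD_iff.1 (hrest X hX)
      exact ⟨this.1, fun hx => (this.2 hx).trans (extend_F_of_notMem T' hX u _).symm⟩

theorem extend_uniqueSolutions {T' : CausalModel (restrictedSig S Vs C hC)}
    (hT' : T'.UniqueSolutions) : (extend T').UniqueSolutions := by
  classical
  intro g u
  obtain ⟨v', hv', huniq⟩ := hT' (fun X' => g X'.1) (reduceContext u)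
  let v : S.Assignment := fun Y =>
    if hY : Y ∈ Vs then v' ⟨Y, hY⟩ else (g Y).getD (Classical.arbitrary (S.valV Y))
  have hvVs : ∀ Y (hY : Y ∈ Vs), v Y = v' ⟨Y, hY⟩ := fun Y hY => dif_pos hY
  have hvrest : ∀ Y ∉ Vs, v Y = (g Y).getD (Classical.arbitrary (S.valV Y)) :=
    fun Y hY => dif_neg hY
  have hv'v : (fun X' : (restrictedSig S Vs C hC).V => v X'.1) = v' :=
    funext fun X' => hvVs X'.1 X'.2
  refine ⟨v, isSolution_extend_iff.2 ⟨hv'v ▸ hv', hvrest⟩, fun w hw => ?_⟩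
  obtain ⟨hwVs, hwrest⟩ := isSolution_extend_iff.1 hw
  funext Y
  by_cases hY : Y ∈ Vs
  · exact (congrFun (huniq _ hwVs) ⟨Y, hY⟩).trans (hvVs Y hY).symm
  · exact (hwrest Y hY).trans (hvrest Y hY).symm

theorem extend_sol {T' : CausalModel (restrictedSig S Vs C hC)} (hT' : T'.UniqueSolutions)
    (g : S.Intervention) {u : S.Context} (hu : u ∈ C) (X' : (restrictedSig S Vs C hC).V) :
    hT'.sol (fun X' => g X'.1) (fun _ => ⟨u, hu⟩) X' =
      (extend_uniqueSolutions hT').sol g u X'.1 := by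
  have h := (isSolution_extend_iff.1 ((extend_uniqueSolutions hT').isSolution_sol g u)).1
  rw [reduceContext_of_mem hu] at h
  exact congrFun (hT'.eq_sol h).symm X'

theorem extend_recursive {T' : CausalModel (restrictedSig S Vs C hC)} (hrec : T'.Recursive) :
    (extend T').Recursive := by
  classical
  obtain ⟨r', hr', hresp⟩ := hrec
  have : IsStrictTotalOrder ((restrictedSig S Vs C hC).V ⊕ Fin (Fintype.card S.V))
      (Sum.Lex r' (· < ·)) := {}
  -- Order `Vs` by `r'` and put it first; the other variables have constant equations, so
  -- any order among them works.
  let key : S.V → (restrictedSig S Vs C hC).V ⊕ Fin (Fintype.card S.V) := fun X =>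
    if hX : X ∈ Vs then .inl ⟨X, hX⟩ else .inr (Fintype.equivFin S.V X)
  have hkey : ∀ X (hX : X ∈ Vs), key X = .inl ⟨X, hX⟩ := fun X hX => dif_pos hX
  have hkey' : ∀ X ∉ Vs, key X = .inr (Fintype.equivFin S.V X) := fun X hX => dif_neg hX
  have hkey_inj : key.Injective := by
    intro X Y h
    by_cases hX : X ∈ Vs <;> by_cases hY : Y ∈ Vs
    · rw [hkey X hX, hkey Y hY] at h
      exact congrArg Subtype.val (Sum.inl_injective h)
    · rw [hkey X hX, hkey' Y hY] at h
      exact absurd h Sum.inl_ne_inr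
    · rw [hkey' X hX, hkey Y hY] at h
      exact absurd h Sum.inr_ne_inl
    · rw [hkey' X hX, hkey' Y hY] at h
      exact (Fintype.equivFin S.V).injective (Sum.inr_injective h)
  refine ⟨Function.onFun (Sum.Lex r' (· < ·)) key, hkey_inj.isStrictTotalOrder_onFun _, ?_⟩
  intro X u w₁ w₂ hw
  by_cases hX : X ∈ Vs
  · rw [extend_F_val T' ⟨X, hX⟩, extend_F_val T' ⟨X, hX⟩]
    refine hresp ⟨X, hX⟩ _ _ _ fun Y' hY' hnr => hw Y'.1 _ fun h => hnr ?_
    have h' : Sum.Lex r' (· < ·) (key X) (key Y'.1) := h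
    rw [hkey X hX, hkey Y'.1 Y'.2] at h'
    exact Sum.lex_inl_inl.1 h'
  · rw [extend_F_of_notMem T' hX, extend_F_of_notMem T' hX]

end Extend

end restrictedSig

namespace LPlus

open restrictedSig

variable {S : Signature} {φ : LPlus S}

theorem sat_reduced_project_iff {T : CausalModel S} (hT : T.UniqueSolutions) :
    φ.reduced.sat (project (Vs := φ.vars) (hC := φ.contexts_nonempty) hT) ↔ φ.sat T :=
  sat_restrict_iff hT (project_uniqueSolutions hT)
    (fun _ hg _ hu X' => project_sol hT hg hu X') φ _ _

theorem sat_reduced_iff_sat_extend {T' : CausalModel (reducedSig S φ)}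
    (hT' : T'.UniqueSolutions) : φ.reduced.sat T' ↔ φ.sat (extend T') :=
  sat_restrict_iff (extend_uniqueSolutions hT') hT'
    (fun g _ _ hu X' => extend_sol hT' g hu X') φ _ _

end LPlus

theorem satisfiable_iff_satisfiable_reduced_general (S : Signature) (φ : LPlus S) :
    ((∃ T : CausalModel S, T.Recursive ∧ φ.sat T) ↔
      (∃ T' : CausalModel (reducedSig S φ), T'.Recursive ∧ φ.reduced.sat T')) ∧
    ((∃ T : CausalModel S, T.UniqueSolutions ∧ φ.sat T) ↔
      (∃ T' : CausalModel (reducedSig S φ), T'.UniqueSolutions ∧ φ.reduced.sat T')) := by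
  refine ⟨⟨?_, ?_⟩, ⟨?_, ?_⟩⟩
  · rintro ⟨T, hrec, hsat⟩
    exact ⟨_, restrictedSig.project_recursive hrec.uniqueSolutions hrec,
      (LPlus.sat_reduced_project_iff hrec.uniqueSolutions).2 hsat⟩
  · rintro ⟨T', hrec, hsat⟩
    exact ⟨_, restrictedSig.extend_recursive hrec,
      (LPlus.sat_reduced_iff_sat_extend hrec.uniqueSolutions).1 hsat⟩
  · rintro ⟨T, hT, hsat⟩
    exact ⟨_, restrictedSig.project_uniqueSolutions hT,
      (LPlus.sat_reduced_project_iff hT).2 hsat⟩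
  · rintro ⟨T', hT', hsat⟩
    exact ⟨_, restrictedSig.extend_uniqueSolutions hT',
      (LPlus.sat_reduced_iff_sat_extend hT').1 hsat⟩

/-- reduction to the relevant variables for recursive and unique-solution
models: `φ ∈ L⁺(S)` is satisfiable in `T_rec(S)` iff it is satisfiable in
`T_rec(S_φ)`, and satisfiable in `T_uniq(S)` iff satisfiable in `T_uniq(S_φ)`. -/
theorem satisfiable_iff_satisfiable_reduced (S : Signature) (hS : S.Standard)
    (φ : LPlus S) :
    ((∃ T : CausalModel S, T.Recursive ∧ φ.sat T) ↔
      (∃ T' : CausalModel (reducedSig S φ), T'.Recursive ∧ φ.reduced.sat T')) ∧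
    ((∃ T : CausalModel S, T.UniqueSolutions ∧ φ.sat T) ↔
      (∃ T' : CausalModel (reducedSig S φ), T'.UniqueSolutions ∧ φ.reduced.sat T')) :=
  satisfiable_iff_satisfiable_reduced_general S φ
end

section
/- Reduction to the relevant variables fails for arbitrary causal models: let S = (∅, {X, Y, Z}, R) with R(X) = R(Y) = R(Z) = {0, 1}, and let φ be the formula ⟨X←0⟩(Y = 0) ∧ ⟨X←0⟩(Y = 1). Then the causal model T over S with F_X(y, z) = y ⊕ z, F_Y(x, z) = x ⊕ z, and F_Z(x, y) = x ⊕ y (⊕ denoting addition mod 2) satisfies φ, but no causal model over the signature (∅, {X, Y}, R restricted to {X, Y}) satisfies φ. -/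
/-- The signature `S = (∅, {X, Y, Z}, R)` with `R(X) = R(Y) = R(Z) = {0, 1}`; `X, Y, Z`
are the variables `0, 1, 2 : Fin 3`, values are in `Fin 2`. -/
def sig17 : Signature where
  U := Empty
  V := Fin 3
  uFin := inferInstance
  vFin := inferInstance
  vDecEq := inferInstance
  valU := fun u => u.elim
  valV := fun _ => Fin 2
  valUFin := fun u => u.elim
  valVFin := fun _ => inferInstance
  valUNonempty := fun u => u.elim
  valVNonempty := fun _ => ⟨0⟩

theorem succ_ne17 : ∀ i : Fin 3, i + 1 ≠ i := by decide
theorem succ2_ne17 : ∀ i : Fin 3, i + 2 ≠ i := by decide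

/-- The causal model with `F_X(y, z) = y ⊕ z`, `F_Y(x, z) = x ⊕ z`, `F_Z(x, y) = x ⊕ y`
(`⊕` addition mod 2): each variable is the mod-2 sum of the other two. -/
def model17 : CausalModel sig17 where
  F := fun (i : Fin 3) u w =>
    let a : Fin 2 := w (i + 1) (succ_ne17 i)
    let b : Fin 2 := w (i + 2) (succ2_ne17 i)
    a + b

/-- The intervention `X ← 0`. -/
def setX17 : sig17.Intervention :=
  fun (Z : Fin 3) => if Z = (0 : Fin 3) then some (0 : Fin 2) else none

/-- The formula `⟨X←0⟩(Y = 0) ∧ ⟨X←0⟩(Y = 1)` over the three-variable signature. -/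
def phi17 (u : sig17.Context) : LPlus sig17 :=
  LPlus.and (LPlus.dia setX17 (IForm.atom (1 : Fin 3) u (0 : Fin 2)))
            (LPlus.dia setX17 (IForm.atom (1 : Fin 3) u (1 : Fin 2)))

/-- The restricted signature `(∅, {X, Y}, R|_{X,Y})`. -/
def sig17' : Signature where
  U := Empty
  V := Fin 2
  uFin := inferInstance
  vFin := inferInstance
  vDecEq := inferInstance
  valU := fun u => u.elim
  valV := fun _ => Fin 2
  valUFin := fun u => u.elim
  valVFin := fun _ => inferInstance
  valUNonempty := fun u => u.elim
  valVNonempty := fun _ => ⟨0⟩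

/-- The intervention `X ← 0` over the restricted signature. -/
def setX17' : sig17'.Intervention :=
  fun (Z : Fin 2) => if Z = (0 : Fin 2) then some (0 : Fin 2) else none

/-- The formula `⟨X←0⟩(Y = 0) ∧ ⟨X←0⟩(Y = 1)` over the restricted signature. -/
def phi17' (u : sig17'.Context) : LPlus sig17' :=
  LPlus.and (LPlus.dia setX17' (IForm.atom (1 : Fin 2) u (0 : Fin 2)))
            (LPlus.dia setX17' (IForm.atom (1 : Fin 2) u (1 : Fin 2)))


/-!
After the intervention `X ← 0` in the mod-2-sum model, the remaining equations say
`Y = Z` and `Z = Y`, which have the two solutions `Y = Z = 0` and `Y = Z = 1`; so both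
diamonds hold. Over `{X, Y}` alone, once `X` is set the value of `Y` in any solution is
forced to be `F_Y(0)`, so `⟨X←0⟩(Y = 0)` and `⟨X←0⟩(Y = 1)` cannot both hold.
-/

namespace LPlus

variable {S : Signature}

theorem sat_dia_atom_iff {T : CausalModel S} {g : S.Intervention} {X : S.V}
    {u : S.Context} {x : S.valV X} :
    (dia g (IForm.atom X u x)).sat T ↔ ∃ v, T.IsSolution g u v ∧ v X = x := by
  simp only [dia, sat, CausalModel.boxSat, IForm.mentions, IForm.eval,
    Set.mem_singleton_iff, forall_eq, not_forall, not_not]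
  exact ⟨fun ⟨σ, hσ, hX⟩ => ⟨σ u, hσ, hX⟩, fun ⟨v, hv, hX⟩ => ⟨fun _ => v, hv, hX⟩⟩

end LPlus

namespace CausalModel

variable {S : Signature} {T : CausalModel S} {g : S.Intervention} {u : S.Context}

theorem IsSolution.apply_eq_of_intervened_ne {v v' : S.Assignment} {Y : S.V}
    (hv : T.IsSolution g u v) (hv' : T.IsSolution g u v')
    (hg : ∀ W, W ≠ Y → g W ≠ none) : v Y = v' Y := by
  have hagree : ∀ W, W ≠ Y → v W = v' W := fun W hW => by
    obtain ⟨w, hw⟩ := Option.ne_none_iff_exists'.mp (hg W hW)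
    rw [(hv W).1 w hw, (hv' W).1 w hw]
  cases hY : g Y with
  | none =>
    rw [(hv Y).2 hY, (hv' Y).2 hY]
    congr 1
    funext W hW
    exact hagree W hW
  | some y => rw [(hv Y).1 y hY, (hv' Y).1 y hY]

theorem not_sat_dia_and_dia_of_intervened_ne {Y : S.V} {y y' : S.valV Y} (hne : y ≠ y')
    (hg : ∀ W, W ≠ Y → g W ≠ none) :
    ¬ (LPlus.and (LPlus.dia g (IForm.atom Y u y))
        (LPlus.dia g (IForm.atom Y u y'))).sat T := by
  rintro ⟨h, h'⟩
  obtain ⟨v, hv, rfl⟩ := LPlus.sat_dia_atom_iff.mp h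
  obtain ⟨v', hv', rfl⟩ := LPlus.sat_dia_atom_iff.mp h'
  exact hne (hv.apply_eq_of_intervened_ne hv' hg)

end CausalModel

theorem model17_isSolution_setX17 (u : sig17.Context) (b : Fin 2) :
    model17.IsSolution setX17 u ![0, b, b] := by
  intro X
  fin_cases X
  · exact ⟨fun x hx => Option.some.inj hx, fun h => absurd h (Option.some_ne_none _)⟩
  · exact ⟨fun x hx => absurd hx.symm (Option.some_ne_none _), fun _ => (add_zero b).symm⟩
  · exact ⟨fun x hx => absurd hx.symm (Option.some_ne_none _), fun _ => (zero_add b).symm⟩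

theorem setX17'_ne_none : ∀ W : Fin 2, W ≠ 1 → setX17' W ≠ none := by
  intro W hW
  fin_cases W
  · exact Option.some_ne_none _
  · exact absurd rfl hW

/-- reduction to the relevant variables fails for arbitrary causal
models: the mod-2-sum model over `{X, Y, Z}` satisfies `⟨X←0⟩(Y=0) ∧ ⟨X←0⟩(Y=1)`,
but no causal model over `(∅, {X, Y}, R|_{X,Y})` satisfies this formula. -/
theorem reduction_fails_for_arbitrary_models
    (u : sig17.Context) (u' : sig17'.Context) :
    (phi17 u).sat model17 ∧ ∀ T' : CausalModel sig17', ¬ (phi17' u').sat T' :=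
  ⟨⟨LPlus.sat_dia_atom_iff.mpr ⟨_, model17_isSolution_setX17 u 0, rfl⟩,
    LPlus.sat_dia_atom_iff.mpr ⟨_, model17_isSolution_setX17 u 1, rfl⟩⟩,
   fun _ => CausalModel.not_sat_dia_and_dia_of_intervened_ne Fin.zero_ne_one setX17'_ne_none⟩
end
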